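/- arXiv:1608.08989 — 6 statements merged into one kernel-verified Lean document; each statement's English description precedes it below -/
import Mathlib

section
/- For all 1 ≤ s₁ < s₂ ≤ j with j+1 ≤ n one has the determinantal identity D⁻(m+1,…,⟨m+s₁⟩,…,m+j) · D⁻(m+1,…,⟨m+s₂⟩,…,m+j+1) − D⁻(m+1,…,⟨m+s₂⟩,…,m+j) · D⁻(m+1,…,⟨m+s₁⟩,…,m+j+1) = D⁻(m+1,…,m+j) · D⁻(m+1,…,⟨m+s₁⟩,…,⟨m+s₂⟩,…,m+j+1). -/
/-!
Adjoining the unit row `(0, …, 0, 1)` to the `j × (j + 1)` matrix `(c_{m+u, m+v})` gives a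
square matrix `A` of size `j + 1` with `det A = D⁻(m+1, …, m+j)`, and each of the six
determinants in the identity is a minor of `A` obtained by deleting one or both of its last two
rows and one or both of the columns `s₁ < s₂` (a minor that keeps the unit row is expanded along
it). The identity is then the Desnanot–Jacobi identity for `A`.

Desnanot–Jacobi itself is proved with Jacobi's adjugate trick, which yields it multiplied by
`det A`; the factor is cancelled for the generic matrix over `ℤ[X_{ij}]` and the result
specialized.
-/

noncomputable section

/-- `Dminus c m l` : the determinant `D⁻(l)` of the matrix with rows `m+1,…,m+l.length`
and columns given by the list `l`, whose `(u,v)`-entry is `c (m+u) (l.get v)`. -/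
def Dminus {R : Type*} [CommRing R] (c : ℕ → ℕ → R) (m : ℕ) (l : List ℕ) : R :=
  (Matrix.of fun u v : Fin l.length => c (m + u.1 + 1) (l.get v)).det

namespace List

theorem range'_eq_ofFn (a k : ℕ) : range' a k = ofFn fun v : Fin k => a + v :=
  ext_getElem (by simp) fun i _ _ => by simp

theorem eraseIdx_ofFn {α : Type*} {k : ℕ} (f : Fin (k + 1) → α) (p : Fin (k + 1)) :
    (ofFn f).eraseIdx p = ofFn (f ∘ p.succAbove) := by
  refine ext_getElem (by simp [length_eraseIdx, p.is_le]) fun i _ _ => ?_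
  simp only [getElem_eraseIdx, List.getElem_ofFn, Function.comp_apply, Fin.succAbove, Fin.lt_def]
  split_ifs <;> simp_all

theorem erase_ofFn {α : Type*} [BEq α] [LawfulBEq α] {k : ℕ} {f : Fin (k + 1) → α}
    (hf : Function.Injective f) (p : Fin (k + 1)) :
    (ofFn f).erase (f p) = ofFn (f ∘ p.succAbove) := by
  rw [← eraseIdx_ofFn, ← (nodup_ofFn.mpr hf).erase_getElem p (by simp [p.is_le]),
    List.getElem_ofFn]

theorem range'_erase (a k : ℕ) (p : Fin (k + 1)) :
    (range' a (k + 1)).erase (a + p) = ofFn fun v => a + (p.succAbove v : ℕ) := by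
  rw [range'_eq_ofFn]
  exact erase_ofFn (f := fun v : Fin (k + 1) => a + v)
    (fun x y h => by simpa [Fin.ext_iff] using h) p

theorem range'_erase_erase (a k : ℕ) {p q : Fin (k + 1)} (hpq : p < q) :
    ((range' a (k + 2)).erase (a + p)).erase (a + q) =
      ofFn fun v => a + (q.castSucc.succAbove (p.succAbove v) : ℕ) := by
  have erase_q := range'_erase a (k + 1) q.castSucc
  rw [Fin.val_castSucc] at erase_q
  have hp : a + (p : ℕ) = a + (q.castSucc.succAbove p : ℕ) := by
    rw [Fin.succAbove_castSucc_of_lt _ _ hpq, Fin.val_castSucc]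
  rw [erase_comm, erase_q, hp]
  exact erase_ofFn (f := fun v => a + (q.castSucc.succAbove v : ℕ))
    (fun x y h => Fin.succAbove_right_injective (Fin.ext (by simpa using h))) p

end List

namespace Matrix

theorem submatrix_updateCol_succAbove_succAbove {α m l : Type*} {k : ℕ}
    (A : Matrix m (Fin (k + 1)) α) (f : l → m) (j : Fin (k + 1)) (j' : Fin k) (w : m → α) :
    (A.updateCol (j.succAbove j') w).submatrix f j.succAbove =
      (A.submatrix f j.succAbove).updateCol j' (w ∘ f) := by
  ext r s
  by_cases hs : s = j' <;> simp [hs]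

variable {R : Type*} [CommRing R]

theorem det_one_updateCol_updateCol {n : Type*} [Fintype n] [DecidableEq n] {p q : n}
    (hpq : p ≠ q) (u v : n → R) :
    det (((1 : Matrix n n R).updateCol p u).updateCol q v) = u p * v q - u q * v p := by
  let U : Matrix n (Fin 2) R :=
    of fun x => ![u x - (Pi.single p 1 : n → R) x, v x - (Pi.single q 1 : n → R) x]
  let V : Matrix (Fin 2) n R := of ![Pi.single p 1, Pi.single q 1]
  have h : ((1 : Matrix n n R).updateCol p u).updateCol q v = 1 + U * V := by
    ext x y
    by_cases hq : y = q
    · subst hq; simp [U, V, mul_apply, hpq.symm, one_apply, Pi.single_apply]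
    by_cases hp : y = p
    · subst hp; simp [U, V, mul_apply, hpq, one_apply, Pi.single_apply]
    · simp [U, V, mul_apply, hq, hp, one_apply, Pi.single_apply]
  rw [h, det_one_add_mul_comm, det_fin_two]
  simp [U, V, Pi.single_apply, hpq, hpq.symm]
  ring

theorem det_updateCol_single {k : ℕ} (A : Matrix (Fin (k + 1)) (Fin (k + 1)) R)
    (i j : Fin (k + 1)) :
    det (A.updateCol j (Pi.single i 1)) =
      (-1) ^ (i + j : ℕ) * det (A.submatrix i.succAbove j.succAbove) := by
  rw [det_succ_column _ j, Finset.sum_eq_single i (fun r _ hr => by simp [hr]) (by simp)]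
  simp

theorem det_updateCol_single_updateCol_single {k : ℕ}
    (A : Matrix (Fin (k + 2)) (Fin (k + 2)) R) (i j : Fin (k + 2)) (i' j' : Fin (k + 1)) :
    det ((A.updateCol (j.succAbove j') (Pi.single (i.succAbove i') 1)).updateCol j
        (Pi.single i 1)) =
      (-1) ^ (i + j + i' + j' : ℕ) *
        det (A.submatrix (i.succAbove ∘ i'.succAbove) (j.succAbove ∘ j'.succAbove)) := by
  have h : Pi.single (i.succAbove i') (1 : R) ∘ i.succAbove = Pi.single i' 1 := by
    ext r; simp [Pi.single_apply]
  rw [det_updateCol_single, submatrix_updateCol_succAbove_succAbove, h, det_updateCol_single,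
    submatrix_submatrix, ← mul_assoc, ← pow_add, ← add_assoc]

theorem det_mul_det_mul_det_submatrix_succAbove_succAbove {k : ℕ}
    (A : Matrix (Fin (k + 2)) (Fin (k + 2)) R) (i j : Fin (k + 2)) (i' j' : Fin (k + 1)) :
    det A *
        (det A * det (A.submatrix (i.succAbove ∘ i'.succAbove) (j.succAbove ∘ j'.succAbove))) =
      det A * ((-1) ^ (i' + j' + i.succAbove i' + j.succAbove j' : ℕ) *
        (det (A.submatrix (i.succAbove i').succAbove (j.succAbove j').succAbove) *
            det (A.submatrix i.succAbove j.succAbove) -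
          det (A.submatrix (i.succAbove i').succAbove j.succAbove) *
            det (A.submatrix i.succAbove (j.succAbove j').succAbove))) := by
  set a := i.succAbove i'
  set b := j.succAbove j'
  set M₂ := det (A.submatrix (i.succAbove ∘ i'.succAbove) (j.succAbove ∘ j'.succAbove))
  have hbj : b ≠ j := Fin.succAbove_ne j j'
  -- Jacobi's trick: `A * C` is `A` with columns `b`, `j` replaced by `det A • eₐ` and
  -- `det A • eᵢ`, while `det C` is a `2 × 2` minor of the adjugate.
  let C := ((1 : Matrix _ _ R).updateCol b (adjugate A *ᵥ Pi.single a 1)).updateCol j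
    (adjugate A *ᵥ Pi.single i 1)
  have hAC : A * C =
      (A.updateCol b (det A • Pi.single a 1)).updateCol j (det A • Pi.single i 1) := by
    simp only [C, mul_updateCol, mul_one, mulVec_mulVec, mul_adjugate, smul_mulVec, one_mulVec]
  have det_AC : det (A * C) = det A * det A * ((-1) ^ (i + j + i' + j' : ℕ) * M₂) := by
    rw [hAC, det_updateCol_smul, updateCol_comm _ hbj, det_updateCol_smul,
      updateCol_comm _ hbj.symm, det_updateCol_single_updateCol_single, mul_assoc]
  have det_C : det C = adjugate A b a * adjugate A j i - adjugate A j a * adjugate A b i := by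
    simp only [C, det_one_updateCol_updateCol hbj, mulVec_single_one, col_apply]
  simp only [adjugate_fin_succ_eq_det_submatrix] at det_C
  set t : R := (-1) ^ (i + j + i' + j' : ℕ)
  set u : R := (-1) ^ (a + b + i + j : ℕ)
  set X :=
    det (A.submatrix a.succAbove b.succAbove) * det (A.submatrix i.succAbove j.succAbove) -
      det (A.submatrix a.succAbove j.succAbove) * det (A.submatrix i.succAbove b.succAbove)
  have key : det A * (u * X) = det A * det A * (t * M₂) := by
    rw [← det_AC, det_mul, det_C]; ring
  have htu : t * u = (-1 : R) ^ (i' + j' + a + b : ℕ) := by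
    rw [← pow_add, show (i + j + i' + j' + (a + b + i + j) : ℕ) = i' + j' + a + b + 2 * (i + j)
      by ring, pow_add, pow_mul, neg_one_sq, one_pow, mul_one]
  have htt : t * t = 1 := by
    rw [← pow_add]; exact Even.neg_one_pow ⟨_, rfl⟩
  linear_combination (det A * X) * htu - t * key - (det A * det A * M₂) * htt

/-- The **Desnanot–Jacobi identity**. -/
theorem det_mul_det_submatrix_succAbove_succAbove {k : ℕ}
    (A : Matrix (Fin (k + 2)) (Fin (k + 2)) R) (i j : Fin (k + 2)) (i' j' : Fin (k + 1)) :
    det A * det (A.submatrix (i.succAbove ∘ i'.succAbove) (j.succAbove ∘ j'.succAbove)) =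
      (-1) ^ (i' + j' + i.succAbove i' + j.succAbove j' : ℕ) *
        (det (A.submatrix (i.succAbove i').succAbove (j.succAbove j').succAbove) *
            det (A.submatrix i.succAbove j.succAbove) -
          det (A.submatrix (i.succAbove i').succAbove j.succAbove) *
            det (A.submatrix i.succAbove (j.succAbove j').succAbove)) := by
  let X := mvPolynomialX (Fin (k + 2)) (Fin (k + 2)) ℤ
  have hX := mul_left_cancel₀ (det_mvPolynomialX_ne_zero (Fin (k + 2)) ℤ)
    (det_mul_det_mul_det_submatrix_succAbove_succAbove X i j i' j')
  let φ := MvPolynomial.aeval (R := ℤ) fun p : Fin (k + 2) × Fin (k + 2) ↦ A p.1 p.2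
  have hA : X.map φ = A := mvPolynomialX_mapMatrix_aeval ℤ A
  simpa only [map_mul, map_sub, map_pow, map_neg, map_one, AlgHom.map_det,
    AlgHom.mapMatrix_apply, ← submatrix_map, hA] using congrArg φ hX

theorem det_eq_det_submatrix_castSucc_of_row_last {k : ℕ}
    (A : Matrix (Fin (k + 1)) (Fin (k + 1)) R) (h : A (Fin.last k) = Pi.single (Fin.last k) 1) :
    det A = det (A.submatrix Fin.castSucc Fin.castSucc) := by
  rw [det_succ_row A (Fin.last k),
    Fintype.sum_eq_single (Fin.last k) (fun v hv => by simp [h, hv])]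
  simp [h, ← two_mul]

theorem det_submatrix_succAbove_castSucc_of_row_last {k : ℕ}
    (A : Matrix (Fin (k + 2)) (Fin (k + 2)) R)
    (h : A (Fin.last (k + 1)) = Pi.single (Fin.last (k + 1)) 1) (x y : Fin (k + 1)) :
    det (A.submatrix x.castSucc.succAbove y.castSucc.succAbove) =
      det (A.submatrix (Fin.castSucc ∘ x.succAbove) (Fin.castSucc ∘ y.succAbove)) := by
  have hcomp (z : Fin (k + 1)) :
      z.castSucc.succAbove ∘ Fin.castSucc = Fin.castSucc ∘ z.succAbove :=
    funext fun _ => Fin.castSucc_succAbove_castSucc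
  rw [det_eq_det_submatrix_castSucc_of_row_last, submatrix_submatrix, hcomp, hcomp]
  ext v
  simp [Fin.succAbove_ne_last_last (Fin.castSucc_ne_last x), h, Pi.single_apply,
    Fin.succAbove_eq_last_iff (Fin.castSucc_ne_last y)]

/-- A three-term Plücker relation: the minors of size `k + 1` of `N` are taken in all its rows,
those of size `k` in all but the last one. -/
theorem plucker_three_term {k : ℕ} (N : Matrix (Fin (k + 1)) (Fin (k + 2)) R)
    {p q : Fin (k + 1)} (hpq : p < q) :
    det (N.submatrix Fin.castSucc (Fin.castSucc ∘ p.succAbove)) *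
        det (N.submatrix id q.castSucc.succAbove) -
      det (N.submatrix Fin.castSucc (Fin.castSucc ∘ q.succAbove)) *
        det (N.submatrix id p.castSucc.succAbove) =
      det (N.submatrix id Fin.castSucc) *
        det (N.submatrix Fin.castSucc (q.castSucc.succAbove ∘ p.succAbove)) := by
  let A : Matrix (Fin (k + 2)) (Fin (k + 2)) R :=
    of (Fin.lastCases (Pi.single (Fin.last _) 1) N)
  have hlast : A (Fin.last _) = Pi.single (Fin.last _) 1 :=
    Fin.lastCases_last (motive := fun _ => Fin (k + 2) → R)
  have hA {r : ℕ} (f : Fin r → Fin (k + 1)) (g : Fin r → Fin (k + 2)) :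
      A.submatrix (Fin.castSucc ∘ f) g = N.submatrix f g := by
    ext u v
    exact congrFun (Fin.lastCases_castSucc (motive := fun _ => Fin (k + 2) → R) (f u)) (g v)
  have hA' (g : Fin (k + 1) → Fin (k + 2)) : A.submatrix Fin.castSucc g = N.submatrix id g :=
    hA id g
  have hDJ := det_mul_det_submatrix_succAbove_succAbove A (Fin.last _) q.castSucc (Fin.last k) p
  rw [Fin.succAbove_castSucc_of_lt _ _ hpq, Fin.succAbove_last, Fin.succAbove_last,
    det_submatrix_succAbove_castSucc_of_row_last A hlast,
    det_submatrix_succAbove_castSucc_of_row_last A hlast,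
    det_eq_det_submatrix_castSucc_of_row_last A hlast] at hDJ
  simp only [Fin.succAbove_last, hA, hA', Fin.val_last, Fin.val_castSucc] at hDJ
  rw [hDJ, Even.neg_one_pow ⟨k + p, by ring⟩, one_mul]

end Matrix

theorem Dminus_ofFn {R : Type*} [CommRing R] (c : ℕ → ℕ → R) (m : ℕ) {k : ℕ}
    (g : Fin k → ℕ) :
    Dminus c m (List.ofFn g) = (Matrix.of fun u v : Fin k => c (m + u + 1) (g v)).det := by
  rw [Dminus, ← Matrix.det_submatrix_equiv_self (finCongr List.length_ofFn.symm)]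
  congr 1
  ext u v
  simp

theorem statement3_general {R : Type*} [CommRing R] (c : ℕ → ℕ → R) (m j s₁ s₂ : ℕ)
    (hs₁ : 1 ≤ s₁) (h12 : s₁ < s₂) (hs₂ : s₂ ≤ j) :
    Dminus c m ((List.range' (m + 1) j).erase (m + s₁)) *
        Dminus c m ((List.range' (m + 1) (j + 1)).erase (m + s₂))
      - Dminus c m ((List.range' (m + 1) j).erase (m + s₂)) *
          Dminus c m ((List.range' (m + 1) (j + 1)).erase (m + s₁))
      = Dminus c m (List.range' (m + 1) j) *
          Dminus c m (((List.range' (m + 1) (j + 1)).erase (m + s₁)).erase (m + s₂)) := by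
  obtain ⟨k, rfl⟩ : ∃ k, j = k + 1 := ⟨j - 1, by omega⟩
  let p : Fin (k + 1) := ⟨s₁ - 1, by omega⟩
  let q : Fin (k + 1) := ⟨s₂ - 1, by omega⟩
  have hpq : p < q := Fin.mk_lt_mk.mpr (by omega)
  rw [show m + s₁ = m + 1 + p by simp [p]; omega, show m + s₂ = m + 1 + q by simp [q]; omega]
  have erase_p := List.range'_erase (m + 1) (k + 1) p.castSucc
  have erase_q := List.range'_erase (m + 1) (k + 1) q.castSucc
  simp only [Fin.val_castSucc] at erase_p erase_q
  rw [List.range'_erase_erase _ _ hpq, List.range'_erase _ _ p, List.range'_erase _ _ q,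
    erase_p, erase_q, List.range'_eq_ofFn]
  simp only [Dminus_ofFn]
  exact Matrix.plucker_three_term (Matrix.of fun u v => c (m + u + 1) (m + 1 + v)) hpq

/-- the determinantal identity
`D⁻(m+1,…,⟨m+s₁⟩,…,m+j)·D⁻(m+1,…,⟨m+s₂⟩,…,m+j+1)
  − D⁻(m+1,…,⟨m+s₂⟩,…,m+j)·D⁻(m+1,…,⟨m+s₁⟩,…,m+j+1)
  = D⁻(m+1,…,m+j)·D⁻(m+1,…,⟨m+s₁⟩,…,⟨m+s₂⟩,…,m+j+1)`. -/
theorem statement3 {R : Type*} [CommRing R] (c : ℕ → ℕ → R) (m n j s₁ s₂ : ℕ)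
    (hs₁ : 1 ≤ s₁) (h12 : s₁ < s₂) (hs₂ : s₂ ≤ j) (hj : j + 1 ≤ n) :
    Dminus c m ((List.range' (m + 1) j).erase (m + s₁)) *
        Dminus c m ((List.range' (m + 1) (j + 1)).erase (m + s₂))
      - Dminus c m ((List.range' (m + 1) j).erase (m + s₂)) *
          Dminus c m ((List.range' (m + 1) (j + 1)).erase (m + s₁))
      = Dminus c m (List.range' (m + 1) j) *
          Dminus c m (((List.range' (m + 1) (j + 1)).erase (m + s₁)).erase (m + s₂)) :=
  statement3_general c m j s₁ s₂ hs₁ h12 hs₂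
end
end

section
/- Let 2 ≤ s ≤ m and let x₁,…,x_{s−1} and a₁,…,a_s be integers from the set {1,…,m}. Then Σ_{t=1}^{s} (−1)^{s−t} D⁺(x₁,…,x_{s−1},a_t) · D⁺(a₁,…,⟨a_t⟩,…,a_s) = D⁺(x₁,…,x_{s−1}) · D⁺(a₁,…,a_s). -/
/-!
Expand `D⁺(x₁,…,x_{s-1},a_t)` along its last column, whose entry in row `i` is `c_{i,a_t}`, and
exchange the two sums. For fixed `i` the sum over `t` is the expansion along the last row of
`D⁺(a₁,…,a_s)` with that row replaced by row `i`: it vanishes for `i < s` (two equal rows) and is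
`D⁺(a₁,…,a_s)` for `i = s`, where the cofactor of `c_{s,a_t}` is `D⁺(x₁,…,x_{s-1})`.
-/

noncomputable section

/-- `Dplus c l` : the determinant `D⁺(l)` of the matrix with rows `1,…,l.length` and
columns given by the list `l`, whose `(u,t)`-entry is `c u (l.get t)`. -/
def Dplus {R : Type*} [CommRing R] (c : ℕ → ℕ → R) (l : List ℕ) : R :=
  (Matrix.of fun u t : Fin l.length => c (u.1 + 1) (l.get t)).det

theorem neg_one_pow_sub_eq_pow_add {M : Type*} [Monoid M] [HasDistribNeg M] {n t : ℕ}
    (h : t ≤ n) : (-1 : M) ^ (n - t) = (-1) ^ (t + n) := by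
  rw [show t + n = n - t + 2 * t by omega, pow_add, pow_mul, neg_one_sq, one_pow, mul_one]

theorem List.ofFn_append_singleton {α : Type*} {n : ℕ} (f : Fin n → α) (y : α) :
    List.ofFn f ++ [y] = List.ofFn (Fin.snoc f y) := by
  rw [List.ofFn_succ_last]
  simp

theorem List.eraseIdx_ofFn_s4 {α : Type*} {n : ℕ} (f : Fin (n + 1) → α) (t : Fin (n + 1)) :
    (List.ofFn f).eraseIdx t = List.ofFn (f ∘ t.succAbove) := by
  refine List.ext_getElem (by simp [List.length_eraseIdx, Nat.lt_succ_iff.1 t.2])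
    fun k _ _ => ?_
  rw [List.getElem_eraseIdx, List.getElem_ofFn]
  split_ifs with hk
  · simp [Fin.succAbove_of_castSucc_lt t ⟨k, _⟩ (Fin.lt_def.2 hk)]
  · simp [Fin.succAbove_of_le_castSucc t ⟨k, _⟩ (Fin.le_def.2 (by simpa using hk))]

namespace Matrix

variable {R : Type*} [CommRing R] {n : ℕ}

theorem det_updateRow_last (A : Matrix (Fin (n + 1)) (Fin (n + 1)) R) (v : Fin (n + 1) → R) :
    (A.updateRow (Fin.last n) v).det =
      ∑ t : Fin (n + 1), (-1) ^ (t + n : ℕ) * v t * (A.submatrix Fin.castSucc t.succAbove).det := by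
  rw [det_succ_row _ (Fin.last n)]
  refine Finset.sum_congr rfl fun t _ => ?_
  rw [updateRow_self, submatrix_updateRow_succAbove, Fin.succAbove_last, Fin.val_last, add_comm]

theorem det_of_snoc (C : Matrix (Fin (n + 1)) (Fin n) R) (w : Fin (n + 1) → R) :
    (of fun i => Fin.snoc (C i) (w i)).det =
      ∑ i : Fin (n + 1), (-1) ^ (i + n : ℕ) * w i * (C.submatrix i.succAbove id).det := by
  rw [det_succ_column _ (Fin.last n)]
  refine Finset.sum_congr rfl fun i _ => ?_
  have hC : (of fun i => Fin.snoc (C i) (w i)).submatrix i.succAbove Fin.castSucc =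
      C.submatrix i.succAbove id := by
    ext
    simp
  simp only [Fin.succAbove_last, Fin.val_last, of_apply, Fin.snoc_last, hC]

theorem sum_det_of_snoc_mul_det_submatrix (C : Matrix (Fin (n + 1)) (Fin n) R)
    (A : Matrix (Fin (n + 1)) (Fin (n + 1)) R) :
    ∑ t : Fin (n + 1), (-1) ^ (t + n : ℕ) *
        ((of fun i => Fin.snoc (C i) (A i t)).det * (A.submatrix Fin.castSucc t.succAbove).det) =
      (C.submatrix Fin.castSucc id).det * A.det := by
  calc _ = ∑ i : Fin (n + 1), (-1) ^ (i + n : ℕ) * (C.submatrix i.succAbove id).det *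
          (A.updateRow (Fin.last n) (A i)).det := by
        simp_rw [det_of_snoc, det_updateRow_last, Finset.sum_mul, Finset.mul_sum]
        rw [Finset.sum_comm]
        refine Finset.sum_congr rfl fun i _ => Finset.sum_congr rfl fun t _ => ?_
        ring
    _ = (-1) ^ (n + n) * (C.submatrix Fin.castSucc id).det * A.det := by
        rw [Finset.sum_eq_single (Fin.last n)
            (fun i _ hi => by rw [det_updateRow_eq_zero hi, mul_zero]) (by simp),
          updateRow_eq_self, Fin.succAbove_last, Fin.val_last]
    _ = _ := by rw [← two_mul, pow_mul, neg_one_sq, one_pow, one_mul]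

end Matrix

theorem Dplus_ofFn {R : Type*} [CommRing R] (c : ℕ → ℕ → R) {k : ℕ} (v : Fin k → ℕ) :
    Dplus c (List.ofFn v) = (Matrix.of fun u t : Fin k => c (u + 1) (v t)).det := by
  rw [Dplus, ← Matrix.det_submatrix_equiv_self (finCongr List.length_ofFn).symm]
  exact congrArg Matrix.det (by ext; simp)

theorem sum_Dplus_mul_Dplus_eraseIdx {R : Type*} [CommRing R] (c : ℕ → ℕ → R) {n : ℕ}
    (x : Fin n → ℕ) (a : Fin (n + 1) → ℕ) :
    ∑ t : Fin (n + 1), (-1 : R) ^ (n - t.1) *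
        (Dplus c (List.ofFn x ++ [a t]) * Dplus c ((List.ofFn a).eraseIdx t.1))
      = Dplus c (List.ofFn x) * Dplus c (List.ofFn a) := by
  have key := Matrix.sum_det_of_snoc_mul_det_submatrix
    (Matrix.of fun (u : Fin (n + 1)) (k : Fin n) => c (u + 1) (x k))
    (Matrix.of fun u t : Fin (n + 1) => c (u + 1) (a t))
  simp_rw [List.ofFn_append_singleton, List.eraseIdx_ofFn_s4, Dplus_ofFn,
    fun t : Fin (n + 1) => neg_one_pow_sub_eq_pow_add (M := R) (Nat.le_of_lt_succ t.2)]
  convert key using 4 with t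
  · congr 1
    ext u j
    refine Fin.lastCases ?_ (fun k => ?_) j <;> simp
  · rfl
  · ext u k
    simp

theorem statement4_general {R : Type*} [CommRing R] (c : ℕ → ℕ → R) (s : ℕ)
    (hs : 2 ≤ s)
    (x : Fin (s - 1) → ℕ) (a : Fin s → ℕ) :
    ∑ t : Fin s, (-1 : R) ^ (s - 1 - t.1) *
        (Dplus c (List.ofFn x ++ [a t]) * Dplus c ((List.ofFn a).eraseIdx t.1))
      = Dplus c (List.ofFn x) * Dplus c (List.ofFn a) := by
  obtain ⟨n, rfl⟩ : ∃ n, s = n + 1 := ⟨s - 1, by omega⟩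
  exact sum_Dplus_mul_Dplus_eraseIdx c x a

/-- `Σ_{t=1}^{s} (−1)^{s−t} D⁺(x₁,…,x_{s−1},a_t)·D⁺(a₁,…,⟨a_t⟩,…,a_s)
  = D⁺(x₁,…,x_{s−1})·D⁺(a₁,…,a_s)`. -/
theorem statement4 {R : Type*} [CommRing R] (c : ℕ → ℕ → R) (m s : ℕ)
    (hs : 2 ≤ s) (hsm : s ≤ m)
    (x : Fin (s - 1) → ℕ) (a : Fin s → ℕ)
    (hx : ∀ t, 1 ≤ x t ∧ x t ≤ m) (ha : ∀ t, 1 ≤ a t ∧ a t ≤ m) :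
    ∑ t : Fin s, (-1 : R) ^ (s - 1 - t.1) *
        (Dplus c (List.ofFn x ++ [a t]) * Dplus c ((List.ofFn a).eraseIdx t.1))
      = Dplus c (List.ofFn x) * Dplus c (List.ofFn a) :=
  statement4_general c s hs x a
end
end

section
/- Let 1 ≤ u and 2 ≤ s be such that u+s−1 ≤ m, and let a₁,…,a_s be integers from the set {1,…,m}. Then Σ_σ sgn(σ) ∏_{t=1}^{s} D⁺(1,…,u+t−2,σ(a)_t) = D⁺(1,…,u−1,a₁,…,a_s) · ∏_{t=1}^{s−1} D⁺(1,…,u+t−1), where the sum runs over all permutations σ of the tuple (a₁,…,a_s) and σ(a)_t denotes the t-th entry of the permuted tuple. -/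
noncomputable section

/-!
Write `k = u - 1` and view both sides as functions of the truncated columns
`v_j = (c_{i,a_j})_{i ≤ k+s}`. The left side is `det (f_t(v_j))_{j,t}`, where `f_t(w)` is the minor
on the columns `1,…,k+t` of `c` bordered by `w`; the right side is a constant times
`det [c_1 … c_k | v_1 … v_s]`. Both are alternating multilinear in `(v_j)`, so over a field it
suffices to compare them on tuples from a basis, and when the leading minor of size `k+s` is
nonzero the columns `1,…,k+s` of `c` form a basis. On such a tuple both sides vanish if it uses
one of the columns `1,…,k`; otherwise it is a permutation of the columns `k+1,…,k+s`, on which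
`(f_t(v_j))` is triangular with the leading minors on its diagonal. The identity is polynomial in
the `c_{ij}`, so it holds over every commutative ring once it holds for the generic array over the
fraction field of `ℤ[X_{ij}]`, whose leading minors are nonzero.
-/

theorem List.range'_eq_ofFn_s6 (a N : ℕ) : List.range' a N = List.ofFn fun j : Fin N => a + j := by
  apply List.ext_getElem <;> simp [List.getElem_range']

theorem Fin.append_update_right {α : Type*} {m n : ℕ} [DecidableEq (Fin n)] (u : Fin m → α)
    (v : Fin n → α) (i : Fin n) (x : α) :
    Fin.append u (Function.update v i x) = Function.update (Fin.append u v) (Fin.natAdd m i) x := by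
  ext j
  refine Fin.addCases (fun j => ?_) (fun j => ?_) j
  · have hj : Fin.castAdd n j ≠ Fin.natAdd m i := by simp [Fin.ext_iff]; omega
    simp [Function.update_of_ne hj]
  · simp [Function.update_apply]

theorem Fin.exists_perm_eq_natAdd {k s : ℕ} (v : Fin s → Fin (k + s)) (hv : Function.Injective v)
    (hk : ∀ t, k ≤ (v t : ℕ)) : ∃ σ : Equiv.Perm (Fin s), ∀ t, (v t : ℕ) = k + σ t := by
  let f (t : Fin s) : Fin s := ⟨v t - k, by have := (v t).2; have := t.2; omega⟩
  have hf : Function.Injective f := fun x y hxy => hv <| Fin.ext <| by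
    have := congrArg Fin.val hxy
    simp only [f] at this
    have := hk x; have := hk y
    omega
  exact ⟨Equiv.ofBijective f (Finite.injective_iff_bijective.mp hf), fun t => by
    simp only [Equiv.ofBijective_apply, f]; have := hk t; omega⟩

namespace Dplus

variable {R : Type*} [CommRing R]

def colVec (c : ℕ → ℕ → R) (N x : ℕ) : Fin N → R := fun i => c (i.1 + 1) x

theorem ofFn_eq_det (c : ℕ → ℕ → R) {N : ℕ} (f : Fin N → ℕ) :
    Dplus c (List.ofFn f) = (Matrix.of fun j => colVec c N (f j)).det := by
  have of_length_eq : ∀ (l : List ℕ) (h : l.length = N), (∀ j : Fin N, l[j] = f j) →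
      Dplus c l = (Matrix.of fun j => colVec c N (f j)).det := by
    rintro l rfl hf
    rw [Dplus, ← Matrix.det_transpose]
    congr
    ext u t
    simp [colVec, ← hf]
  exact of_length_eq _ List.length_ofFn (by simp)

theorem eq_zero_of_not_nodup (c : ℕ → ℕ → R) {l : List ℕ} (hl : ¬ l.Nodup) : Dplus c l = 0 := by
  obtain ⟨i, j, hij, hne⟩ : ∃ i j, l.get i = l.get j ∧ i ≠ j := by
    simpa [List.nodup_iff_injective_get, Function.Injective] using hl
  rw [List.get_eq_getElem, List.get_eq_getElem] at hij
  exact Matrix.det_zero_of_column_eq hne fun u => by simp [hij]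

theorem append_singleton_eq_zero (c : ℕ → ℕ → R) {l : List ℕ} {x : ℕ} (hx : x ∈ l) :
    Dplus c (l ++ [x]) = 0 :=
  eq_zero_of_not_nodup c (by simp [List.nodup_append, hx])

theorem range'_append_ofFn_eq_zero (c : ℕ → ℕ → R) (k : ℕ) {s : ℕ} (a : Fin s → ℕ) (j : Fin s)
    (h₁ : 1 ≤ a j) (h₂ : a j ≤ k) : Dplus c (List.range' 1 k ++ List.ofFn a) = 0 :=
  eq_zero_of_not_nodup c fun h => (List.nodup_append.1 h).2.2 (a j)
    (List.mem_range'_1.2 ⟨h₁, by omega⟩) (a j) (List.mem_ofFn.2 ⟨j, rfl⟩) rfl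

theorem range'_append_consecutive (c : ℕ → ℕ → R) (k s : ℕ) :
    Dplus c (List.range' 1 k ++ List.ofFn fun t : Fin s => 1 + (k + t)) =
      Dplus c (List.range' 1 (k + s)) := by
  rw [← List.range'_append (step := 1), List.range'_eq_ofFn_s6 (1 + 1 * k)]
  simp [add_assoc]

theorem range'_of_identity (N : ℕ) :
    Dplus (fun i j => if i = j then (1 : R) else 0) (List.range' 1 N) = 1 := by
  rw [List.range'_eq_ofFn_s6, ofFn_eq_det]
  refine (congrArg Matrix.det ?_).trans Matrix.det_one
  ext i j
  simp [colVec, Matrix.one_apply, Fin.ext_iff, add_comm, eq_comm]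

def borderedMatrix (c : ℕ → ℕ → R) (k : ℕ) {s : ℕ} (a : Fin s → ℕ) : Matrix (Fin s) (Fin s) R :=
  Matrix.of fun j t => Dplus c (List.range' 1 (k + t) ++ [a j])

theorem det_borderedMatrix_eq_zero (c : ℕ → ℕ → R) (k : ℕ) {s : ℕ} (a : Fin s → ℕ) (j : Fin s)
    (h₁ : 1 ≤ a j) (h₂ : a j ≤ k) : (borderedMatrix c k a).det = 0 :=
  Matrix.det_eq_zero_of_row_eq_zero j fun _ =>
    append_singleton_eq_zero c (List.mem_range'_1.2 ⟨h₁, by omega⟩)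

theorem det_borderedMatrix_consecutive (c : ℕ → ℕ → R) (k s : ℕ) :
    (borderedMatrix c k fun t : Fin s => 1 + (k + t)).det =
      ∏ t : Fin s, Dplus c (List.range' 1 (k + t + 1)) := by
  rw [Matrix.det_of_isLowerTriangular]
  · simp [borderedMatrix, List.range'_concat, add_comm]
  · intro j t (hjt : j < t)
    have : (j : ℕ) < t := hjt
    refine append_singleton_eq_zero c (List.mem_range'_1.2 ⟨?_, ?_⟩) <;> dsimp only <;> omega

theorem _root_.RingHom.map_Dplus {S : Type*} [CommRing S] (φ : R →+* S) (c : ℕ → ℕ → R)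
    (l : List ℕ) : φ (Dplus c l) = Dplus (fun i j => φ (c i j)) l := by
  rw [Dplus, RingHom.map_det]
  rfl

theorem _root_.RingHom.map_det_borderedMatrix {S : Type*} [CommRing S] (φ : R →+* S)
    (c : ℕ → ℕ → R) (k : ℕ) {s : ℕ} (a : Fin s → ℕ) :
    φ (borderedMatrix c k a).det = (borderedMatrix (fun i j => φ (c i j)) k a).det := by
  rw [RingHom.map_det]
  congr 1
  ext j t
  exact φ.map_Dplus c _

/-- `w ↦ D⁺(1,…,N,w)` for an arbitrary column vector `w`. -/
def borderedMinor (c : ℕ → ℕ → R) (N : ℕ) : (Fin (N + 1) → R) →ₗ[R] R :=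
  (Matrix.detRowAlternating : (Fin (N + 1) → R) [⋀^Fin (N + 1)]→ₗ[R] R).toMultilinearMap.toLinearMap
    (Fin.snoc (fun j : Fin N => colVec c (N + 1) (1 + j)) 0) (Fin.last N)

theorem borderedMinor_apply (c : ℕ → ℕ → R) (N : ℕ) (w : Fin (N + 1) → R) :
    borderedMinor c N w =
      (Matrix.of (Fin.snoc (fun j : Fin N => colVec c (N + 1) (1 + j)) w)).det := by
  rw [borderedMinor, MultilinearMap.toLinearMap_apply, Fin.update_snoc_last]
  rfl

theorem borderedMinor_colVec (c : ℕ → ℕ → R) (N x : ℕ) :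
    borderedMinor c N (colVec c (N + 1) x) = Dplus c (List.range' 1 N ++ [x]) := by
  have hl : List.range' 1 N ++ [x] = List.ofFn (Fin.snoc (fun j : Fin N => 1 + (j : ℕ)) x) := by
    rw [List.ofFn_succ']
    simp [List.range'_eq_ofFn_s6]
  rw [borderedMinor_apply, hl, ofFn_eq_det]
  exact congrArg (fun M => (Matrix.of M).det)
    (Fin.comp_snoc (colVec c (N + 1)) (fun j : Fin N => 1 + (j : ℕ)) x).symm

def borderedMinorDet (c : ℕ → ℕ → R) (k s : ℕ) : (Fin (k + s) → R) [⋀^Fin s]→ₗ[R] R :=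
  Matrix.detRowAlternating.compLinearMap <| LinearMap.pi fun t : Fin s =>
    (borderedMinor c (k + t)).comp (LinearMap.funLeft R R (Fin.castLE (Nat.add_lt_add_left t.2 k)))

theorem borderedMinorDet_colVec (c : ℕ → ℕ → R) (k s : ℕ) (a : Fin s → ℕ) :
    borderedMinorDet c k s (fun j => colVec c (k + s) (a j)) = (borderedMatrix c k a).det := by
  simp only [borderedMinorDet, borderedMatrix, ← borderedMinor_colVec]
  rfl

/-- `v ↦ det [c_1 … c_k | v_1 … v_s]`, with the columns of `c` truncated to `k + s` rows. -/
def appendDet (c : ℕ → ℕ → R) (k s : ℕ) : (Fin (k + s) → R) [⋀^Fin s]→ₗ[R] R where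
  toFun v := Matrix.detRowAlternating (Fin.append (fun j : Fin k => colVec c (k + s) (1 + j)) v)
  map_update_add' v i x y := by
    simp only [Fin.append_update_right]
    exact Matrix.detRowAlternating.map_update_add _ _ x y
  map_update_smul' v i r x := by
    simp only [Fin.append_update_right]
    exact Matrix.detRowAlternating.map_update_smul _ _ r x
  map_eq_zero_of_eq' v i j hv hij :=
    Matrix.det_zero_of_row_eq (i := Fin.natAdd k i) (j := Fin.natAdd k j) (by simpa using hij) <| by
      rw [Fin.append_right, Fin.append_right, hv]

theorem appendDet_apply (c : ℕ → ℕ → R) (k s : ℕ) (v : Fin s → Fin (k + s) → R) :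
    appendDet c k s v =
      (Matrix.of (Fin.append (fun j : Fin k => colVec c (k + s) (1 + j)) v)).det := rfl

theorem appendDet_colVec (c : ℕ → ℕ → R) (k s : ℕ) (a : Fin s → ℕ) :
    appendDet c k s (fun j => colVec c (k + s) (a j)) = Dplus c (List.range' 1 k ++ List.ofFn a) := by
  rw [List.range'_eq_ofFn_s6, ← List.ofFn_fin_append, ofFn_eq_det, appendDet_apply]
  refine congrArg (fun M => Matrix.det (Matrix.of M)) (funext fun j => ?_)
  refine Fin.addCases (fun j => ?_) (fun j => ?_) j <;> simp

theorem borderedMinorDet_eq_smul_appendDet {K : Type*} [Field K] (c : ℕ → ℕ → K) (k s : ℕ)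
    (hc : Dplus c (List.range' 1 (k + (s + 1))) ≠ 0) :
    borderedMinorDet c k (s + 1) =
      (∏ t : Fin s, Dplus c (List.range' 1 (k + t + 1))) • appendDet c k (s + 1) := by
  have hA : IsUnit (Matrix.of fun i : Fin (k + (s + 1)) => colVec c (k + (s + 1)) (1 + i)) := by
    rw [Matrix.isUnit_iff_isUnit_det, ← ofFn_eq_det c fun i => 1 + (i : ℕ), ← List.range'_eq_ofFn_s6]
    exact hc.isUnit
  have hcard : Fintype.card (Fin (k + (s + 1))) = Module.finrank K (Fin (k + (s + 1)) → K) := by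
    simp
  -- kept opaque: unfolding `basisOfLinearIndependentOfCardEqFinrank` makes elaboration time out
  obtain ⟨b, hb⟩ : ∃ b : Module.Basis (Fin (k + (s + 1))) K (Fin (k + (s + 1)) → K),
      ∀ i, b i = colVec c (k + (s + 1)) (1 + i) :=
    ⟨basisOfLinearIndependentOfCardEqFinrank (Matrix.linearIndependent_rows_of_isUnit hA) hcard,
      fun i => by rw [coe_basisOfLinearIndependentOfCardEqFinrank]; rfl⟩
  refine Module.Basis.ext_alternating b fun v hv => ?_
  simp only [hb, AlternatingMap.smul_apply]
  by_cases h : ∃ t, (v t : ℕ) < k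
  · obtain ⟨t, ht⟩ := h
    rw [borderedMinorDet_colVec c k _ fun j => 1 + v j, appendDet_colVec c k _ fun j => 1 + v j,
      det_borderedMatrix_eq_zero c k _ t (by omega) (by omega),
      range'_append_ofFn_eq_zero c k _ t (by omega) (by omega), smul_zero]
  · push Not at h
    obtain ⟨σ, hσ⟩ := Fin.exists_perm_eq_natAdd v hv h
    have hvσ : (fun t => colVec c (k + (s + 1)) (1 + v t)) =
        (fun t : Fin (s + 1) => colVec c (k + (s + 1)) (1 + (k + (t : ℕ)))) ∘ σ :=
      funext fun t => by simp [hσ]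
    rw [hvσ, AlternatingMap.map_perm, AlternatingMap.map_perm,
      borderedMinorDet_colVec c k _ fun t => 1 + (k + t), appendDet_colVec c k _ fun t => 1 + (k + t),
      det_borderedMatrix_consecutive, range'_append_consecutive, Fin.prod_univ_castSucc, smul_eq_mul]
    simp [add_assoc, mul_smul_comm]

theorem det_borderedMatrix_of_field {K : Type*} [Field K] (c : ℕ → ℕ → K) (k s : ℕ)
    (hc : Dplus c (List.range' 1 (k + (s + 1))) ≠ 0) (a : Fin (s + 1) → ℕ) :
    (borderedMatrix c k a).det =
      Dplus c (List.range' 1 k ++ List.ofFn a) * ∏ t : Fin s, Dplus c (List.range' 1 (k + t + 1)) := by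
  rw [← borderedMinorDet_colVec, borderedMinorDet_eq_smul_appendDet c k s hc,
    AlternatingMap.smul_apply, appendDet_colVec, smul_eq_mul, mul_comm]

theorem det_borderedMatrix (c : ℕ → ℕ → R) (k s : ℕ) (a : Fin (s + 1) → ℕ) :
    (borderedMatrix c k a).det =
      Dplus c (List.range' 1 k ++ List.ofFn a) * ∏ t : Fin s, Dplus c (List.range' 1 (k + t + 1)) := by
  let P := MvPolynomial (ℕ × ℕ) ℤ
  let X : ℕ → ℕ → P := fun i j => MvPolynomial.X (i, j)
  have hι := IsFractionRing.injective P (FractionRing P)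
  have hX : Dplus X (List.range' 1 (k + (s + 1))) ≠ 0 := fun h => by
    have := congrArg (MvPolynomial.eval fun p : ℕ × ℕ => if p.1 = p.2 then (1 : ℤ) else 0) h
    rw [RingHom.map_Dplus, map_zero] at this
    simp [X, range'_of_identity] at this
  have hK := det_borderedMatrix_of_field (fun i j => algebraMap P (FractionRing P) (X i j)) k s
    (by rw [← RingHom.map_Dplus]; exact (map_ne_zero_iff _ hι).2 hX) a
  have hP : (borderedMatrix X k a).det =
      Dplus X (List.range' 1 k ++ List.ofFn a) * ∏ t : Fin s, Dplus X (List.range' 1 (k + t + 1)) :=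
    hι (by simpa only [RingHom.map_det_borderedMatrix, map_mul, map_prod, RingHom.map_Dplus] using hK)
  simpa only [RingHom.map_det_borderedMatrix, map_mul, map_prod, RingHom.map_Dplus, X,
    MvPolynomial.eval₂Hom_X'] using
    congrArg (MvPolynomial.eval₂Hom (Int.castRingHom R) fun p => c p.1 p.2) hP

end Dplus

theorem statement6_general {R : Type*} [CommRing R] (c : ℕ → ℕ → R) (u s : ℕ)
    (hu : 1 ≤ u) (hs : 2 ≤ s)
    (a : Fin s → ℕ) :
    ∑ σ : Equiv.Perm (Fin s), (Equiv.Perm.sign σ : ℤ) •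
        ∏ t : Fin s, Dplus c (List.range' 1 (u + t.1 - 1) ++ [a (σ t)])
      = Dplus c (List.range' 1 (u - 1) ++ List.ofFn a) *
          ∏ t ∈ Finset.Icc 1 (s - 1), Dplus c (List.range' 1 (u + t - 1)) := by
  obtain ⟨k, rfl⟩ : ∃ k, u = k + 1 := ⟨u - 1, by omega⟩
  obtain ⟨s, rfl⟩ : ∃ s', s = s' + 1 := ⟨s - 1, by omega⟩
  have hprod : ∏ t ∈ Finset.Icc 1 (s + 1 - 1), Dplus c (List.range' 1 (k + 1 + t - 1)) =
      ∏ t : Fin s, Dplus c (List.range' 1 (k + t + 1)) := by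
    rw [Nat.add_sub_cancel, ← Finset.Ico_add_one_right_eq_Icc, Finset.prod_Ico_eq_prod_range,
      Nat.add_sub_cancel, ← Fin.prod_univ_eq_prod_range]
    exact Finset.prod_congr rfl fun t _ => by congr 2; omega
  rw [hprod, Nat.add_sub_cancel, ← Dplus.det_borderedMatrix, Matrix.det_apply]
  refine Finset.sum_congr rfl fun σ _ => ?_
  simp only [Units.smul_def, Dplus.borderedMatrix, Matrix.of_apply, add_right_comm k 1,
    Nat.add_sub_cancel]

/-- `Σ_σ sgn(σ) ∏_{t=1}^{s} D⁺(1,…,u+t−2,σ(a)_t)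
  = D⁺(1,…,u−1,a₁,…,a_s) · ∏_{t=1}^{s−1} D⁺(1,…,u+t−1)`,
the sum over all permutations of the tuple `(a₁,…,a_s)`. -/
theorem statement6 {R : Type*} [CommRing R] (c : ℕ → ℕ → R) (m u s : ℕ)
    (hu : 1 ≤ u) (hs : 2 ≤ s) (husm : u + s - 1 ≤ m)
    (a : Fin s → ℕ) (ha : ∀ t, 1 ≤ a t ∧ a t ≤ m) :
    ∑ σ : Equiv.Perm (Fin s), (Equiv.Perm.sign σ : ℤ) •
        ∏ t : Fin s, Dplus c (List.range' 1 (u + t.1 - 1) ++ [a (σ t)])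
      = Dplus c (List.range' 1 (u - 1) ++ List.ofFn a) *
          ∏ t ∈ Finset.Icc 1 (s - 1), Dplus c (List.range' 1 (u + t - 1)) :=
  statement6_general c u s hu hs a
end
end

section
/- Let T and T′ be semistandard skew tableaux of the same skew shape with entries in {m+1,…,m+n}. If C(T) = C(T′) then T = T′, and likewise if R(T) = R(T′) then T = T′. Consequently, the restrictions of the Clausen preorders ≺_c and ≺_r to the set of semistandard skew tableaux of a fixed skew shape are linear (total) orders, and so are their restrictions to the set of Littlewood–Richardson tableaux of a fixed skew shape. -/
noncomputable section

/-- A partition, written 1-based: `α i` is the length of row `i` for `i ≥ 1`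
(we normalize `α 0 = 0`); it is weakly decreasing and eventually zero. -/
def IsPartition (α : ℕ → ℕ) : Prop :=
  α 0 = 0 ∧ (∀ i j, 1 ≤ i → i ≤ j → α j ≤ α i) ∧ ∃ N, ∀ i, N ≤ i → α i = 0

/-- The set of cells of the skew diagram `α/β` (rows and columns 1-based):
`(i,j)` with `β i < j ≤ α i`. -/
def cellOf (α β : ℕ → ℕ) : Set (ℕ × ℕ) := {p | β p.1 < p.2 ∧ p.2 ≤ α p.1}

/-- Semistandard skew tableau: entries weakly increase along rows (left to right) and
strictly increase down columns. -/
def IsSSkew (α β : ℕ → ℕ) (T : ℕ × ℕ → ℕ) : Prop :=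
  (∀ i j j', (i, j) ∈ cellOf α β → (i, j') ∈ cellOf α β → j ≤ j' → T (i, j) ≤ T (i, j')) ∧
  (∀ i i' j, (i, j) ∈ cellOf α β → (i', j) ∈ cellOf α β → i < i' → T (i, j) < T (i', j))

/-- The Clausen column matrix: `(CmatC α β m T) j k` is the number of occurrences of
symbols from `{m+1,…,m+k}` in the columns of `T` of index `≥ j`. -/
def CmatC (α β : ℕ → ℕ) (m : ℕ) (T : ℕ × ℕ → ℕ) (j k : ℕ) : ℕ :=
  Set.ncard {p | p ∈ cellOf α β ∧ j ≤ p.2 ∧ m + 1 ≤ T p ∧ T p ≤ m + k}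

/-- The Clausen row matrix: `(CmatR α β m T) i k` is the number of occurrences of
symbols from `{m+1,…,m+k}` in the rows of `T` of index `≤ i`. -/
def CmatR (α β : ℕ → ℕ) (m : ℕ) (T : ℕ × ℕ → ℕ) (i k : ℕ) : ℕ :=
  Set.ncard {p | p ∈ cellOf α β ∧ p.1 ≤ i ∧ m + 1 ≤ T p ∧ T p ≤ m + k}

/-- `C(T) = C(T′)`. -/
def CeqC (α β : ℕ → ℕ) (m n : ℕ) (T T' : ℕ × ℕ → ℕ) : Prop :=
  ∀ j k, 1 ≤ j → 1 ≤ k → k ≤ n → CmatC α β m T j k = CmatC α β m T' j k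

/-- `R(T) = R(T′)`. -/
def ReqR (α β : ℕ → ℕ) (m n : ℕ) (T T' : ℕ × ℕ → ℕ) : Prop :=
  ∀ i k, 1 ≤ i → 1 ≤ k → k ≤ n → CmatR α β m T i k = CmatR α β m T' i k

/-- The Clausen column preorder `T ≺_c T′`. -/
def PrecC (α β : ℕ → ℕ) (m n : ℕ) (T T' : ℕ × ℕ → ℕ) : Prop :=
  CeqC α β m n T T' ∨
    ∃ j k, 1 ≤ j ∧ 1 ≤ k ∧ k ≤ n ∧
      (∀ i, j < i → ∀ l, 1 ≤ l → l ≤ n → CmatC α β m T i l = CmatC α β m T' i l) ∧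
      (∀ l, 1 ≤ l → l < k → CmatC α β m T j l = CmatC α β m T' j l) ∧
      CmatC α β m T j k < CmatC α β m T' j k

/-- The Clausen row preorder `T ≺_r T′`. -/
def PrecR (α β : ℕ → ℕ) (m n : ℕ) (T T' : ℕ × ℕ → ℕ) : Prop :=
  ReqR α β m n T T' ∨
    ∃ i k, 1 ≤ i ∧ 1 ≤ k ∧ k ≤ n ∧
      (∀ i', i' < i → ∀ l, 1 ≤ l → l ≤ n → CmatR α β m T i' l = CmatR α β m T' i' l) ∧
      (∀ l, 1 ≤ l → l < k → CmatR α β m T i l = CmatR α β m T' i l) ∧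
      CmatR α β m T i k < CmatR α β m T' i k

/-!
Along a column of a semistandard tableau the entries increase with the row, and along a row
they increase with the column. On such a chain a monotone filling is determined by the numbers
`#{cells with entry ≤ c}`: if `T p < T' p`, then at `c = T p` every cell of the chain up to `p`
is counted for `T`, but for `T'` only cells strictly before `p` are. Consecutive differences of
`C(T)` (resp. `R(T)`) are exactly these counts for single columns (resp. rows), so `C(T)` and
`R(T)` each determine `T`. The preorders compare these matrices lexicographically, hence are
total, and antisymmetric up to equality of the matrices.
-/

theorem MonotoneOn.le_of_forall_ncard_sep_le {ι β : Type*} [Preorder ι] [LinearOrder β]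
    {s : Set ι} {t : Set β} {f g : ι → β} (hs : s.Finite) (hchain : IsChain (· ≤ ·) s)
    (hf : MonotoneOn f s) (hg : MonotoneOn g s) (hft : Set.MapsTo f s t)
    (h : ∀ c ∈ t, {x ∈ s | f x ≤ c}.ncard ≤ {x ∈ s | g x ≤ c}.ncard) :
    ∀ x ∈ s, g x ≤ f x := by
  intro x hx
  by_contra! hlt
  have below_f : {y ∈ s | y ≤ x} ⊆ {y ∈ s | f y ≤ f x} :=
    fun y ⟨hy, hyx⟩ => ⟨hy, hf hy hx hyx⟩
  have below_g : {y ∈ s | g y ≤ f x} ⊆ {y ∈ s | y < x} := by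
    rintro y ⟨hy, hgy⟩
    have hxy : ¬ x ≤ y := fun hxy => absurd (hg hx hy hxy) (by order)
    exact ⟨hy, lt_of_le_not_ge ((hchain.total hy hx).resolve_right hxy) hxy⟩
  have strict : {y ∈ s | y < x} ⊂ {y ∈ s | y ≤ x} :=
    ⟨fun y ⟨hy, hyx⟩ => ⟨hy, hyx.le⟩, fun hsub => lt_irrefl x (hsub ⟨hx, le_rfl⟩).2⟩
  have := h (f x) (hft hx)
  have := Set.ncard_le_ncard below_g (hs.subset fun y hy => hy.1)
  have := Set.ncard_lt_ncard strict (hs.subset fun y hy => hy.1)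
  have := Set.ncard_le_ncard below_f (hs.subset fun y hy => hy.1)
  omega

theorem MonotoneOn.eqOn_of_forall_ncard_sep_eq {ι β : Type*} [Preorder ι] [LinearOrder β]
    {s : Set ι} {t : Set β} {f g : ι → β} (hs : s.Finite) (hchain : IsChain (· ≤ ·) s)
    (hf : MonotoneOn f s) (hg : MonotoneOn g s) (hft : Set.MapsTo f s t) (hgt : Set.MapsTo g s t)
    (h : ∀ c ∈ t, {x ∈ s | f x ≤ c}.ncard = {x ∈ s | g x ≤ c}.ncard) :
    Set.EqOn f g s := fun x hx =>
  le_antisymm (hg.le_of_forall_ncard_sep_le hs hchain hf hgt (fun c hc => (h c hc).ge) x hx)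
    (hf.le_of_forall_ncard_sep_le hs hchain hg hft (fun c hc => (h c hc).le) x hx)

section Shape

variable {α β : ℕ → ℕ}

lemma one_le_fst_of_mem_cellOf (hα : α 0 = 0) {p : ℕ × ℕ} (hp : p ∈ cellOf α β) : 1 ≤ p.1 := by
  obtain ⟨hβp, hαp⟩ := hp
  by_contra! h
  rw [Nat.lt_one_iff.mp h, hα] at hαp
  omega

lemma one_le_snd_of_mem_cellOf {p : ℕ × ℕ} (hp : p ∈ cellOf α β) : 1 ≤ p.2 :=
  Nat.one_le_of_lt hp.1

lemma snd_le_of_mem_cellOf (hα : IsPartition α) {p : ℕ × ℕ} (hp : p ∈ cellOf α β) :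
    p.2 ≤ α 1 :=
  hp.2.trans (hα.2.1 1 p.1 le_rfl (one_le_fst_of_mem_cellOf hα.1 hp))

lemma cellOf_finite (hα : IsPartition α) : (cellOf α β).Finite := by
  obtain ⟨N, hN⟩ := hα.2.2
  refine ((Set.finite_Iio N).prod (Set.finite_Iic (α 1))).subset fun p hp => ⟨?_, ?_⟩
  · show p.1 < N
    by_contra! h
    have : β p.1 < p.2 ∧ p.2 ≤ α p.1 := hp
    have := hN p.1 h
    omega
  · exact snd_le_of_mem_cellOf hα hp

lemma isChain_column (s : Set (ℕ × ℕ)) (j : ℕ) : IsChain (· ≤ ·) {p ∈ s | p.2 = j} := by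
  rintro ⟨a, _⟩ ⟨-, rfl⟩ ⟨b, _⟩ ⟨-, hb⟩ -
  simp only [Prod.mk_le_mk] at hb ⊢
  omega

lemma isChain_row (s : Set (ℕ × ℕ)) (i : ℕ) : IsChain (· ≤ ·) {p ∈ s | p.1 = i} := by
  rintro ⟨_, a⟩ ⟨-, rfl⟩ ⟨_, b⟩ ⟨-, hb⟩ -
  simp only [Prod.mk_le_mk] at hb ⊢
  omega

lemma IsSSkew.monotoneOn_column {T : ℕ × ℕ → ℕ} (hT : IsSSkew α β T) (j : ℕ) :
    MonotoneOn T {p ∈ cellOf α β | p.2 = j} := by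
  rintro ⟨a, c⟩ ⟨ha, rfl⟩ ⟨b, c'⟩ ⟨hb, hc : c' = c⟩ ⟨hab : a ≤ b, -⟩
  subst hc
  rcases hab.eq_or_lt with rfl | hlt
  · rfl
  · exact (hT.2 a b _ ha hb hlt).le

lemma IsSSkew.monotoneOn_row {T : ℕ × ℕ → ℕ} (hT : IsSSkew α β T) (i : ℕ) :
    MonotoneOn T {p ∈ cellOf α β | p.1 = i} := by
  rintro ⟨r, a⟩ ⟨ha, rfl⟩ ⟨r', b⟩ ⟨hb, hr : r' = r⟩ ⟨-, hab : a ≤ b⟩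
  subst hr
  exact hT.1 _ a b ha hb hab

end Shape

section Clausen

variable {α β : ℕ → ℕ} {m n : ℕ} {T T' : ℕ × ℕ → ℕ}

lemma CmatC_eq_ncard_add (hfin : (cellOf α β).Finite) (hT : ∀ p ∈ cellOf α β, m + 1 ≤ T p)
    (j k : ℕ) :
    CmatC α β m T j k =
      {p ∈ {p ∈ cellOf α β | p.2 = j} | T p ≤ m + k}.ncard + CmatC α β m T (j + 1) k := by
  rw [CmatC, CmatC, ← Set.ncard_union_eq ?_ (hfin.subset fun p hp => hp.1.1)
    (hfin.subset fun p hp => hp.1)]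
  · congr 1
    ext p
    by_cases hp : p ∈ cellOf α β
    · have := hT p hp
      simp only [Set.mem_ofPred_eq, Set.mem_union, hp, true_and]
      constructor <;> intro h <;> omega
    · simp [hp]
  · rw [Set.disjoint_left]
    rintro p ⟨⟨-, hj⟩, -⟩ ⟨-, hj', -⟩
    omega

lemma CmatR_succ_eq_ncard_add (hfin : (cellOf α β).Finite)
    (hT : ∀ p ∈ cellOf α β, m + 1 ≤ T p) (i k : ℕ) :
    CmatR α β m T (i + 1) k =
      {p ∈ {p ∈ cellOf α β | p.1 = i + 1} | T p ≤ m + k}.ncard + CmatR α β m T i k := by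
  rw [CmatR, CmatR, ← Set.ncard_union_eq ?_ (hfin.subset fun p hp => hp.1.1)
    (hfin.subset fun p hp => hp.1)]
  · congr 1
    ext p
    by_cases hp : p ∈ cellOf α β
    · have := hT p hp
      simp only [Set.mem_ofPred_eq, Set.mem_union, hp, true_and]
      constructor <;> intro h <;> omega
    · simp [hp]
  · rw [Set.disjoint_left]
    rintro p ⟨⟨-, hi⟩, -⟩ ⟨-, hi', -⟩
    omega

lemma CmatR_zero (hα : α 0 = 0) (k : ℕ) : CmatR α β m T 0 k = 0 := by
  refine (congrArg Set.ncard (Set.eq_empty_of_forall_notMem ?_)).trans (Set.ncard_empty _)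
  rintro p ⟨hp, h0, -⟩
  have := one_le_fst_of_mem_cellOf hα hp
  omega

lemma CmatC_eq_zero_of_lt (hα : IsPartition α) {j : ℕ} (hj : α 1 < j) (k : ℕ) :
    CmatC α β m T j k = 0 := by
  refine (congrArg Set.ncard (Set.eq_empty_of_forall_notMem ?_)).trans (Set.ncard_empty _)
  rintro p ⟨hp, hjp, -⟩
  have := snd_le_of_mem_cellOf hα hp
  omega

theorem eqOn_of_CeqC (hα : IsPartition α) (hT : ∀ p ∈ cellOf α β, m + 1 ≤ T p ∧ T p ≤ m + n)
    (hT' : ∀ p ∈ cellOf α β, m + 1 ≤ T' p ∧ T' p ≤ m + n) (hss : IsSSkew α β T)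
    (hss' : IsSSkew α β T') (hC : CeqC α β m n T T') : Set.EqOn T T' (cellOf α β) := by
  have hfin := cellOf_finite (β := β) hα
  intro p hp
  refine (hss.monotoneOn_column p.2).eqOn_of_forall_ncard_sep_eq (t := Set.Icc (m + 1) (m + n))
    (hfin.subset fun q hq => hq.1) (isChain_column _ _) (hss'.monotoneOn_column p.2)
    (fun q hq => hT q hq.1) (fun q hq => hT' q hq.1) ?_ ⟨hp, rfl⟩
  rintro c ⟨hc1, hc2⟩
  obtain ⟨k, rfl⟩ : ∃ k, c = m + k := ⟨c - m, by omega⟩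
  have := CmatC_eq_ncard_add hfin (fun q hq => (hT q hq).1) p.2 k
  have := CmatC_eq_ncard_add hfin (fun q hq => (hT' q hq).1) p.2 k
  have := hC p.2 k (one_le_snd_of_mem_cellOf hp) (by omega) (by omega)
  have := hC (p.2 + 1) k (by omega) (by omega) (by omega)
  omega

theorem eqOn_of_ReqR (hα : IsPartition α) (hT : ∀ p ∈ cellOf α β, m + 1 ≤ T p ∧ T p ≤ m + n)
    (hT' : ∀ p ∈ cellOf α β, m + 1 ≤ T' p ∧ T' p ≤ m + n) (hss : IsSSkew α β T)
    (hss' : IsSSkew α β T') (hR : ReqR α β m n T T') : Set.EqOn T T' (cellOf α β) := by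
  have hfin := cellOf_finite (β := β) hα
  have hR₀ : ∀ i k, 1 ≤ k → k ≤ n → CmatR α β m T i k = CmatR α β m T' i k := by
    rintro (_ | i) k hk1 hkn
    · rw [CmatR_zero hα.1, CmatR_zero hα.1]
    · exact hR _ k (by omega) hk1 hkn
  intro p hp
  obtain ⟨i, hi⟩ : ∃ i, p.1 = i + 1 := ⟨p.1 - 1, by have := one_le_fst_of_mem_cellOf hα.1 hp; omega⟩
  refine (hss.monotoneOn_row p.1).eqOn_of_forall_ncard_sep_eq (t := Set.Icc (m + 1) (m + n))
    (hfin.subset fun q hq => hq.1) (isChain_row _ _) (hss'.monotoneOn_row p.1)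
    (fun q hq => hT q hq.1) (fun q hq => hT' q hq.1) ?_ ⟨hp, rfl⟩
  rintro c ⟨hc1, hc2⟩
  obtain ⟨k, rfl⟩ : ∃ k, c = m + k := ⟨c - m, by omega⟩
  rw [hi]
  have := CmatR_succ_eq_ncard_add hfin (fun q hq => (hT q hq).1) i k
  have := CmatR_succ_eq_ncard_add hfin (fun q hq => (hT' q hq).1) i k
  have := hR₀ i k (by omega) (by omega)
  have := hR₀ (i + 1) k (by omega) (by omega)
  omega

end Clausen

lemma exists_first_ne {n : ℕ} {a b : ℕ → ℕ} (h : ∃ k, 1 ≤ k ∧ k ≤ n ∧ a k ≠ b k) :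
    ∃ k, 1 ≤ k ∧ k ≤ n ∧ (∀ l, 1 ≤ l → l < k → a l = b l) ∧ a k ≠ b k := by
  classical
  obtain ⟨hk1, hkn, hne⟩ := Nat.find_spec h
  refine ⟨Nat.find h, hk1, hkn, fun l hl1 hlk => ?_, hne⟩
  by_contra hne'
  exact Nat.find_min h hlk ⟨hl1, by omega, hne'⟩

section Preorder

variable {α β : ℕ → ℕ} {m n : ℕ}

lemma precC_total (hα : IsPartition α) (T T' : ℕ × ℕ → ℕ) :
    PrecC α β m n T T' ∨ PrecC α β m n T' T := by
  classical
  by_cases hC : CeqC α β m n T T'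
  · exact .inl (.inl hC)
  set P : ℕ → Prop := fun j => ∃ k, 1 ≤ k ∧ k ≤ n ∧ CmatC α β m T j k ≠ CmatC α β m T' j k
  obtain ⟨j₀, hj₀, hPj₀⟩ : ∃ j, 1 ≤ j ∧ P j := by
    simp only [CeqC, not_forall] at hC
    obtain ⟨j, k, hj, hk1, hkn, hne⟩ := hC
    exact ⟨j, hj, k, hk1, hkn, hne⟩
  have hj₀α : j₀ ≤ α 1 := by
    by_contra! h
    obtain ⟨k, -, -, hne⟩ := hPj₀
    simp [CmatC_eq_zero_of_lt hα h] at hne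
  have hJ : ∀ i, Nat.findGreatest P (α 1) < i → ∀ l, 1 ≤ l → l ≤ n →
      CmatC α β m T i l = CmatC α β m T' i l := by
    intro i hi l hl1 hln
    by_contra hne
    rcases le_or_gt i (α 1) with hiα | hiα
    · exact Nat.findGreatest_is_greatest hi hiα ⟨l, hl1, hln, hne⟩
    · simp [CmatC_eq_zero_of_lt hα hiα] at hne
  have hJ1 : 1 ≤ Nat.findGreatest P (α 1) := hj₀.trans (Nat.le_findGreatest hj₀α hPj₀)
  obtain ⟨k, hk1, hkn, hk, hne⟩ := exists_first_ne (Nat.findGreatest_spec hj₀α hPj₀)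
  rcases hne.lt_or_gt with h | h
  · exact .inl (.inr ⟨_, k, hJ1, hk1, hkn, hJ, hk, h⟩)
  · exact .inr (.inr ⟨_, k, hJ1, hk1, hkn, fun i hi l hl1 hln => (hJ i hi l hl1 hln).symm,
      fun l hl1 hlk => (hk l hl1 hlk).symm, h⟩)

lemma precR_total (hα : α 0 = 0) (T T' : ℕ × ℕ → ℕ) :
    PrecR α β m n T T' ∨ PrecR α β m n T' T := by
  classical
  by_cases hR : ReqR α β m n T T'
  · exact .inl (.inl hR)
  set P : ℕ → Prop := fun i => ∃ k, 1 ≤ k ∧ k ≤ n ∧ CmatR α β m T i k ≠ CmatR α β m T' i k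
  have hP : ∃ i, P i := by
    simp only [ReqR, not_forall] at hR
    obtain ⟨i, k, -, hk1, hkn, hne⟩ := hR
    exact ⟨i, k, hk1, hkn, hne⟩
  have hI : ∀ i, i < Nat.find hP → ∀ l, 1 ≤ l → l ≤ n →
      CmatR α β m T i l = CmatR α β m T' i l := by
    intro i hi l hl1 hln
    by_contra hne
    exact Nat.find_min hP hi ⟨l, hl1, hln, hne⟩
  have hI1 : 1 ≤ Nat.find hP := by
    by_contra! h0
    obtain ⟨k, -, -, hne⟩ := Nat.find_spec hP
    simp [show Nat.find hP = 0 by omega, CmatR_zero hα] at hne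
  obtain ⟨k, hk1, hkn, hk, hne⟩ := exists_first_ne (Nat.find_spec hP)
  rcases hne.lt_or_gt with h | h
  · exact .inl (.inr ⟨_, k, hI1, hk1, hkn, hI, hk, h⟩)
  · exact .inr (.inr ⟨_, k, hI1, hk1, hkn, fun i hi l hl1 hln => (hI i hi l hl1 hln).symm,
      fun l hl1 hlk => (hk l hl1 hlk).symm, h⟩)

lemma CeqC_of_precC_of_precC {T T' : ℕ × ℕ → ℕ} (h : PrecC α β m n T T')
    (h' : PrecC α β m n T' T) : CeqC α β m n T T' := by
  rcases h with h | ⟨j, k, hj, hk1, hkn, hgt, hlt, hne⟩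
  · exact h
  rcases h' with h' | ⟨j', k', hj', hk1', hkn', hgt', hlt', hne'⟩
  · exact absurd (h' j k hj hk1 hkn) (by omega)
  exfalso
  rcases lt_trichotomy j j' with hjj | rfl | hjj
  · have := hgt j' hjj k' hk1' hkn'
    omega
  · rcases lt_trichotomy k k' with hkk | rfl | hkk
    · have := hlt' k hk1 hkk
      omega
    · omega
    · have := hlt k' hk1' hkk
      omega
  · have := hgt' j hjj k hk1 hkn
    omega

lemma ReqR_of_precR_of_precR {T T' : ℕ × ℕ → ℕ} (h : PrecR α β m n T T')
    (h' : PrecR α β m n T' T) : ReqR α β m n T T' := by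
  rcases h with h | ⟨i, k, hi, hk1, hkn, hlt, hlt₂, hne⟩
  · exact h
  rcases h' with h' | ⟨i', k', hi', hk1', hkn', hlt', hlt₂', hne'⟩
  · exact absurd (h' i k hi hk1 hkn) (by omega)
  exfalso
  rcases lt_trichotomy i i' with hii | rfl | hii
  · have := hlt' i hii k hk1 hkn
    omega
  · rcases lt_trichotomy k k' with hkk | rfl | hkk
    · have := hlt₂' k hk1 hkk
      omega
    · omega
    · have := hlt₂ k' hk1' hkk
      omega
  · have := hlt i' hii k' hk1' hkn'
    omega

end Preorder

theorem statement9_general (α β : ℕ → ℕ) (m n : ℕ)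
    (hα : IsPartition α)
    (T T' : ℕ × ℕ → ℕ)
    (hT : ∀ p ∈ cellOf α β, m + 1 ≤ T p ∧ T p ≤ m + n)
    (hT' : ∀ p ∈ cellOf α β, m + 1 ≤ T' p ∧ T' p ≤ m + n)
    (hss : IsSSkew α β T) (hss' : IsSSkew α β T') :
    (CeqC α β m n T T' → ∀ p ∈ cellOf α β, T p = T' p) ∧
      (ReqR α β m n T T' → ∀ p ∈ cellOf α β, T p = T' p) ∧
      (PrecC α β m n T T' ∨ PrecC α β m n T' T) ∧
      (PrecR α β m n T T' ∨ PrecR α β m n T' T) ∧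
      (PrecC α β m n T T' → PrecC α β m n T' T → ∀ p ∈ cellOf α β, T p = T' p) ∧
      (PrecR α β m n T T' → PrecR α β m n T' T → ∀ p ∈ cellOf α β, T p = T' p) := by
  have eq_of_C := eqOn_of_CeqC hα hT hT' hss hss'
  have eq_of_R := eqOn_of_ReqR hα hT hT' hss hss'
  exact ⟨eq_of_C, eq_of_R, precC_total hα T T', precR_total hα.1 T T',
    fun h h' => eq_of_C (CeqC_of_precC_of_precC h h'),
    fun h h' => eq_of_R (ReqR_of_precR_of_precR h h')⟩

/-- for semistandard skew tableaux of the same shape with entries in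
`{m+1,…,m+n}`, equality of Clausen column (resp. row) matrices implies equality of the
tableaux; consequently the restrictions of the Clausen preorders `≺_c` and `≺_r` to
semistandard (in particular, to Littlewood–Richardson) tableaux of a fixed shape are
linear orders (they are total, and antisymmetric up to equality of tableaux). -/
theorem statement9 (α β : ℕ → ℕ) (m n : ℕ) (hn : 1 ≤ n)
    (hα : IsPartition α) (hβ : IsPartition β) (hβα : ∀ i, β i ≤ α i)
    (T T' : ℕ × ℕ → ℕ)
    (hT : ∀ p ∈ cellOf α β, m + 1 ≤ T p ∧ T p ≤ m + n)
    (hT' : ∀ p ∈ cellOf α β, m + 1 ≤ T' p ∧ T' p ≤ m + n)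
    (hss : IsSSkew α β T) (hss' : IsSSkew α β T') :
    (CeqC α β m n T T' → ∀ p ∈ cellOf α β, T p = T' p) ∧
      (ReqR α β m n T T' → ∀ p ∈ cellOf α β, T p = T' p) ∧
      (PrecC α β m n T T' ∨ PrecC α β m n T' T) ∧
      (PrecR α β m n T T' ∨ PrecR α β m n T' T) ∧
      (PrecC α β m n T T' → PrecC α β m n T' T → ∀ p ∈ cellOf α β, T p = T' p) ∧
      (PrecR α β m n T T' → PrecR α β m n T' T → ∀ p ∈ cellOf α β, T p = T' p) :=
  statement9_general α β m n hα T T' hT hT' hss hss'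
end
end

section
/- Assume T⁺ is semistandard and shifted Yamanouchi. Let j₁ < j₂ and l be such that the cells (j₁,l) and (j₂,l) both belong to the skew diagram [ν/ω] (i.e. ω_{j₁} < l ≤ ν_{j₁} and ω_{j₂} < l ≤ ν_{j₂}). If the (l − ω_{j₁})-th occurrence of the symbol m+j₁ in w(T⁺) lies in row k₁ of T⁺ and the (l − ω_{j₂})-th occurrence of the symbol m+j₂ in w(T⁺) lies in row k₂ of T⁺, then k₁ < k₂. -/
/-!
By the shifted Yamanouchi condition at the cell `x₂`, `ω_{j₁} + a_{j₁} ≥ ω_{j₂} + a_{j₂} = l`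
there, so at least `l - ω_{j₁}` copies of `m+j₁` are read up to `x₂`; hence `x₁` is read no
later than `x₂`. They cannot share a row: `x₂` would then lie weakly left of `x₁`, and rows of
`T⁺` weakly increase, whereas `m + j₁ < m + j₂`.
-/

noncomputable section

/-- The conjugate partition (1-based): `(conjP α) j = #{i ≥ 1 | α i ≥ j}` for `j ≥ 1`. -/
def conjP (α : ℕ → ℕ) (j : ℕ) : ℕ := Set.ncard {i : ℕ | 1 ≤ i ∧ 1 ≤ j ∧ j ≤ α i}

/-- Anti-semistandard skew tableau: entries strictly decrease along rows (left to right)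
and weakly decrease down columns. -/
def IsAntiSSkew (α β : ℕ → ℕ) (T : ℕ × ℕ → ℕ) : Prop :=
  (∀ i j j', (i, j) ∈ cellOf α β → (i, j') ∈ cellOf α β → j < j' → T (i, j') < T (i, j)) ∧
  (∀ i i' j, (i, j) ∈ cellOf α β → (i', j) ∈ cellOf α β → i ≤ i' → T (i', j) ≤ T (i, j))

/-- `wle p q` : cell `p` comes weakly before cell `q` in the reading order of the reading
word (rows top to bottom, inside each row right to left). -/
def wle (p q : ℕ × ℕ) : Prop := p.1 < q.1 ∨ (p.1 = q.1 ∧ q.2 ≤ p.2)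

/-- Number of occurrences of the symbol `v` among the cells weakly before `x` in the
reading word of `T` (so "the `j`-th occurrence of `v` in `w(T)` is at the cell `x`" reads
`x ∈ cellOf α β ∧ T x = v ∧ occBefore α β T v x = j`). -/
def occBefore (α β : ℕ → ℕ) (T : ℕ × ℕ → ℕ) (v : ℕ) (x : ℕ × ℕ) : ℕ :=
  Set.ncard {p | p ∈ cellOf α β ∧ wle p x ∧ T p = v}

/-- Total number of occurrences of the symbol `v` in the skew tableau `T`. -/
def occCount (α β : ℕ → ℕ) (T : ℕ × ℕ → ℕ) (v : ℕ) : ℕ :=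
  Set.ncard {p | p ∈ cellOf α β ∧ T p = v}

/-- The reading word of `T` is a lattice word for the symbols `base, base+1, …` :
in every initial segment, `v+1` occurs at most as often as `v`, for every `v ≥ base`. -/
def IsLatticeFrom (α β : ℕ → ℕ) (T : ℕ × ℕ → ℕ) (base : ℕ) : Prop :=
  ∀ x ∈ cellOf α β, ∀ v, base ≤ v → occBefore α β T (v + 1) x ≤ occBefore α β T v x

/-- `T` (with symbols `m+1, m+2, …`) is shifted Yamanouchi with respect to the shift `ω`:
for every initial segment `w′` of the reading word and every `i ≥ 1`,
`ω i + a_i(w′) ≥ ω (i+1) + a_{i+1}(w′)`. -/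
def ShiftedYam (α β : ℕ → ℕ) (m : ℕ) (ω : ℕ → ℕ) (T : ℕ × ℕ → ℕ) : Prop :=
  ∀ x ∈ cellOf α β, ∀ i, 1 ≤ i →
    ω (i + 1) + occBefore α β T (m + i + 1) x ≤ ω i + occBefore α β T (m + i) x

/-- `Tm = Rp(Tp)` : if the `j`-th occurrence of the symbol `m+i` in the reading word of
`Tp` lies in column `c` of `Tp`, then the entry of `Tm` at the cell `(i, ω i + j)` is `c`. -/
def IsRp (α β : ℕ → ℕ) (m : ℕ) (ω : ℕ → ℕ) (Tp Tm : ℕ × ℕ → ℕ) : Prop :=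
  ∀ x ∈ cellOf α β, ∀ i, 1 ≤ i → Tp x = m + i →
    Tm (i, ω i + occBefore α β Tp (m + i) x) = x.2

/-- `λ⁺` : the first `m` rows of `λ`. -/
def lamPlus (m : ℕ) (la : ℕ → ℕ) : ℕ → ℕ := fun i => if i ≤ m then la i else 0

/-- `λ⁻` : the conjugate of the partition `(λ_{m+1}, λ_{m+2}, …)`. -/
def lamMinus (m : ℕ) (la : ℕ → ℕ) : ℕ → ℕ :=
  conjP (fun i => if 1 ≤ i then la (m + i) else 0)

lemma wle_trans {p q r : ℕ × ℕ} (hpq : wle p q) (hqr : wle q r) : wle p r := by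
  unfold wle at *
  omega

lemma finite_cellOf_wle (α β : ℕ → ℕ) (x : ℕ × ℕ) :
    {p | p ∈ cellOf α β ∧ wle p x}.Finite := by
  refine ((Set.finite_Iic x.1).prod (Set.finite_Iic (∑ i ∈ Finset.range (x.1 + 1), α i))).subset ?_
  rintro p ⟨⟨-, hpα⟩, hpx⟩
  have hp₁ : p.1 ≤ x.1 := by unfold wle at hpx; omega
  have hαp : α p.1 ≤ ∑ i ∈ Finset.range (x.1 + 1), α i :=
    Finset.single_le_sum (fun _ _ => Nat.zero_le _) (Finset.mem_range.2 (by omega))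
  exact ⟨hp₁, hpα.trans hαp⟩

lemma occBefore_lt_of_not_wle {α β : ℕ → ℕ} {T : ℕ × ℕ → ℕ} {v : ℕ} {x y : ℕ × ℕ}
    (hx : x ∈ cellOf α β) (hTx : T x = v) (hnot : ¬ wle x y) :
    occBefore α β T v y < occBefore α β T v x := by
  have hyx : wle y x := by unfold wle at hnot ⊢; omega
  set S := {p | p ∈ cellOf α β ∧ wle p x ∧ T p = v}
  have hS : S.Finite := (finite_cellOf_wle α β x).subset fun p hp => ⟨hp.1, hp.2.1⟩
  have hsub : {p | p ∈ cellOf α β ∧ wle p y ∧ T p = v} ⊆ S \ {x} := by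
    rintro p ⟨hp, hpy, hpv⟩
    exact ⟨⟨hp, wle_trans hpy hyx, hpv⟩, fun (hpx : p = x) => hnot (hpx ▸ hpy)⟩
  calc occBefore α β T v y ≤ (S \ {x}).ncard := Set.ncard_le_ncard hsub hS.sdiff
    _ < S.ncard := Set.ncard_sdiff_singleton_lt_of_mem ⟨hx, by unfold wle; omega, hTx⟩ hS

lemma wle_of_occBefore_le {α β : ℕ → ℕ} {T : ℕ × ℕ → ℕ} {v : ℕ} {x y : ℕ × ℕ}
    (hx : x ∈ cellOf α β) (hTx : T x = v)
    (hle : occBefore α β T v x ≤ occBefore α β T v y) : wle x y := by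
  by_contra hnot
  exact (occBefore_lt_of_not_wle hx hTx hnot).not_ge hle

lemma ShiftedYam.add_occBefore_le {α β ω : ℕ → ℕ} {m : ℕ} {T : ℕ × ℕ → ℕ}
    (hsy : ShiftedYam α β m ω T) {x : ℕ × ℕ} (hx : x ∈ cellOf α β) {i j : ℕ}
    (hi : 1 ≤ i) (hij : i ≤ j) :
    ω j + occBefore α β T (m + j) x ≤ ω i + occBefore α β T (m + i) x := by
  induction j, hij using Nat.le_induction with
  | base => exact le_rfl
  | succ j hij ih => exact (hsy x hx j (hi.trans hij)).trans ih

lemma IsSSkew.fst_lt_of_wle {α β : ℕ → ℕ} {T : ℕ × ℕ → ℕ} (hss : IsSSkew α β T)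
    {x y : ℕ × ℕ} (hx : x ∈ cellOf α β) (hy : y ∈ cellOf α β)
    (hxy : wle x y) (hT : T x < T y) : x.1 < y.1 := by
  rcases hxy with hlt | ⟨hrow, hcol⟩
  · exact hlt
  · obtain ⟨x₁, x₂⟩ := x
    obtain ⟨y₁, y₂⟩ := y
    dsimp only at hrow hcol
    subst hrow
    exact absurd (hss.1 x₁ y₂ x₂ hy hx hcol) hT.not_ge

theorem statement10_general (m : ℕ) (la μ ν : ℕ → ℕ)
    (Tp : ℕ × ℕ → ℕ)
    (hss : IsSSkew (conjP (lamPlus m la)) (conjP μ) Tp)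
    (hsy : ShiftedYam (conjP (lamPlus m la)) (conjP μ) m (lamMinus m la) Tp)
    (j₁ j₂ l : ℕ) (hj₁ : 1 ≤ j₁) (hjj : j₁ < j₂)
    (hc₁ : (j₁, l) ∈ cellOf ν (lamMinus m la))
    (hc₂ : (j₂, l) ∈ cellOf ν (lamMinus m la))
    (x₁ x₂ : ℕ × ℕ)
    (hx₁ : x₁ ∈ cellOf (conjP (lamPlus m la)) (conjP μ))
    (hx₂ : x₂ ∈ cellOf (conjP (lamPlus m la)) (conjP μ))
    (hT₁ : Tp x₁ = m + j₁) (hT₂ : Tp x₂ = m + j₂)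
    (ho₁ : occBefore (conjP (lamPlus m la)) (conjP μ) Tp (m + j₁) x₁ = l - lamMinus m la j₁)
    (ho₂ : occBefore (conjP (lamPlus m la)) (conjP μ) Tp (m + j₂) x₂ = l - lamMinus m la j₂) :
    x₁.1 < x₂.1 := by
  have hyam := hsy.add_occBefore_le hx₂ hj₁ hjj.le
  have hω₁ : lamMinus m la j₁ < l := hc₁.1
  have hω₂ : lamMinus m la j₂ < l := hc₂.1
  have hwle : wle x₁ x₂ := wle_of_occBefore_le hx₁ hT₁ (by omega)
  exact hss.fst_lt_of_wle hx₁ hx₂ hwle (by rw [hT₁, hT₂]; omega)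

/-- if `T⁺` is semistandard and shifted Yamanouchi, and the cells
`(j₁,l)`, `(j₂,l)` (`j₁ < j₂`) both belong to `[ν/ω]`, then the `(l−ω_{j₁})`-th occurrence
of `m+j₁` in `w(T⁺)` lies in a strictly higher row than the `(l−ω_{j₂})`-th occurrence of
`m+j₂`. -/
theorem statement10 (m n : ℕ) (hm : 1 ≤ m) (hn : 1 ≤ n) (la μ ν : ℕ → ℕ)
    (hla : IsPartition la) (hook : la (m + 1) ≤ n)
    (hμ : IsPartition μ) (hμl : ∀ i, μ i ≤ lamPlus m la i)
    (hν : IsPartition ν) (hνω : ∀ i, lamMinus m la i ≤ ν i)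
    (Tp : ℕ × ℕ → ℕ)
    (hrange : ∀ p ∈ cellOf (conjP (lamPlus m la)) (conjP μ),
      m + 1 ≤ Tp p ∧ Tp p ≤ m + n)
    (hcont : ∀ i, 1 ≤ i →
      occCount (conjP (lamPlus m la)) (conjP μ) Tp (m + i) = ν i - lamMinus m la i)
    (hss : IsSSkew (conjP (lamPlus m la)) (conjP μ) Tp)
    (hsy : ShiftedYam (conjP (lamPlus m la)) (conjP μ) m (lamMinus m la) Tp)
    (j₁ j₂ l : ℕ) (hj₁ : 1 ≤ j₁) (hjj : j₁ < j₂)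
    (hc₁ : (j₁, l) ∈ cellOf ν (lamMinus m la))
    (hc₂ : (j₂, l) ∈ cellOf ν (lamMinus m la))
    (x₁ x₂ : ℕ × ℕ)
    (hx₁ : x₁ ∈ cellOf (conjP (lamPlus m la)) (conjP μ))
    (hx₂ : x₂ ∈ cellOf (conjP (lamPlus m la)) (conjP μ))
    (hT₁ : Tp x₁ = m + j₁) (hT₂ : Tp x₂ = m + j₂)
    (ho₁ : occBefore (conjP (lamPlus m la)) (conjP μ) Tp (m + j₁) x₁ = l - lamMinus m la j₁)
    (ho₂ : occBefore (conjP (lamPlus m la)) (conjP μ) Tp (m + j₂) x₂ = l - lamMinus m la j₂) :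
    x₁.1 < x₂.1 :=
  statement10_general m la μ ν Tp hss hsy j₁ j₂ l hj₁ hjj hc₁ hc₂ x₁ x₂ hx₁ hx₂ hT₁ hT₂ ho₁ ho₂
end
end

section
/- If λ⁺_m ≥ n and T⁺ is semistandard, then T is semistandard. -/
/-!
A column `j ≤ m` of `T` is a column of the semistandard tableau `T⁺`; it runs down to row
`λ_j ≥ λ_m ≥ n`, where the entry is at most `m + n`. Entries strictly increase down the column, so
the entry in row `i` is at most `m + n - (λ_j - i) ≤ m + i`, which is the entry of row `i` in every
column `j > m`. Hence rows stay weakly increasing across column `m`, and columns `j > m`, filled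
with `m + i` in row `i`, are strictly increasing.
-/

noncomputable section

lemma conjP_zero (α : ℕ → ℕ) : conjP α 0 = 0 := by
  simp [conjP]

namespace IsPartition

variable {α β : ℕ → ℕ}

theorem le_conjP_iff (hα : IsPartition α) {i j : ℕ} (hi : 1 ≤ i) (hj : 1 ≤ j) :
    j ≤ conjP α i ↔ i ≤ α j := by
  obtain ⟨-, hanti, N, hN⟩ := hα
  set S := {k : ℕ | 1 ≤ k ∧ 1 ≤ i ∧ i ≤ α k}
  have hS_finite : S.Finite := (Set.finite_Iio N).subset fun k ⟨_, _, hik⟩ => by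
    rw [Set.mem_Iio]
    by_contra! hNk
    have := hN k hNk
    omega
  change j ≤ S.ncard ↔ _
  constructor
  · intro h
    by_contra! hlt
    have hsub : S ⊆ Finset.Ico 1 j := fun k ⟨hk, _, hik⟩ => by
      simp only [Finset.coe_Ico, Set.mem_Ico]
      refine ⟨hk, ?_⟩
      by_contra! hjk
      have := hanti j k hj hjk
      omega
    have := Set.ncard_le_ncard hsub (Finset.finite_toSet _)
    simp only [Set.ncard_coe_finset, Nat.card_Ico] at this
    omega
  · intro h
    have hsub : (Finset.Icc 1 j : Set ℕ) ⊆ S := fun k hk => by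
      simp only [Finset.coe_Icc, Set.mem_Icc] at hk
      exact ⟨hk.1, hi, h.trans (hanti k j hk.1 hk.2)⟩
    simpa using Set.ncard_le_ncard hsub hS_finite

theorem mem_cellOf_conjP_iff (hα : IsPartition α) (hβ : IsPartition β) {i j : ℕ} :
    (i, j) ∈ cellOf (conjP α) (conjP β) ↔ 1 ≤ j ∧ β j < i ∧ i ≤ α j := by
  show conjP β i < j ∧ j ≤ conjP α i ↔ _
  constructor
  · rintro ⟨hβi, hαi⟩
    have hj : 1 ≤ j := by omega
    have hi : 1 ≤ i := Nat.pos_of_ne_zero fun h0 => by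
      rw [h0, conjP_zero] at hαi
      omega
    rw [← not_le, hβ.le_conjP_iff hi hj, not_le] at hβi
    exact ⟨hj, hβi, (hα.le_conjP_iff hi hj).mp hαi⟩
  · rintro ⟨hj, hβj, hαj⟩
    have hi : 1 ≤ i := by omega
    rw [← not_le, hβ.le_conjP_iff hi hj, not_le]
    exact ⟨hβj, (hα.le_conjP_iff hi hj).mpr hαj⟩

end IsPartition

lemma lamPlus_of_le {m i : ℕ} (la : ℕ → ℕ) (hi : i ≤ m) : lamPlus m la i = la i :=
  if_pos hi

lemma isPartition_lamPlus {la : ℕ → ℕ} (hla : IsPartition la) (m : ℕ) :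
    IsPartition (lamPlus m la) := by
  obtain ⟨h0, hanti, N, hN⟩ := hla
  refine ⟨by simp [lamPlus, h0], fun i j hi hij => ?_, N, fun i hi => by simp [lamPlus, hN i hi]⟩
  by_cases hj : j ≤ m
  · rw [lamPlus_of_le la hj, lamPlus_of_le la (hij.trans hj)]
    exact hanti i j hi hij
  · simp [lamPlus, hj]

lemma mem_cellOf_conjP_lamPlus {m i j : ℕ} {la μ : ℕ → ℕ} (hla : IsPartition la)
    (hμ : IsPartition μ) (hcell : (i, j) ∈ cellOf (conjP la) (conjP μ)) (hj : j ≤ m) :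
    (i, j) ∈ cellOf (conjP (lamPlus m la)) (conjP μ) := by
  rw [(isPartition_lamPlus hla m).mem_cellOf_conjP_iff hμ, lamPlus_of_le la hj]
  exact (hla.mem_cellOf_conjP_iff hμ).mp hcell

theorem IsSSkew.apply_add_le_apply_add_row {α β : ℕ → ℕ} {T : ℕ × ℕ → ℕ}
    (hα : IsPartition α) (hβ : IsPartition β) (hT : IsSSkew (conjP α) (conjP β) T) {i j : ℕ}
    (hcell : (i, j) ∈ cellOf (conjP α) (conjP β)) {k : ℕ} (hk : i + k ≤ α j) :
    T (i, j) + k ≤ T (i + k, j) := by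
  obtain ⟨hj, hβi, -⟩ := (hα.mem_cellOf_conjP_iff hβ).mp hcell
  induction k with
  | zero => simp
  | succ k ih =>
    have hcell_k : (i + k, j) ∈ cellOf (conjP α) (conjP β) :=
      (hα.mem_cellOf_conjP_iff hβ).mpr ⟨hj, by omega, by omega⟩
    have hcell_k1 : (i + (k + 1), j) ∈ cellOf (conjP α) (conjP β) :=
      (hα.mem_cellOf_conjP_iff hβ).mpr ⟨hj, by omega, hk⟩
    have := hT.2 _ _ j hcell_k hcell_k1 (by omega)
    have := ih (by omega)
    omega

theorem apply_le_add_row_of_col_le {m n i j : ℕ} {la μ : ℕ → ℕ} {T : ℕ × ℕ → ℕ}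
    (hla : IsPartition la) (hμ : IsPartition μ) (hlam : n ≤ la m)
    (hbound : ∀ p ∈ cellOf (conjP la) (conjP μ), T p ≤ m + n)
    (hssp : IsSSkew (conjP (lamPlus m la)) (conjP μ) T)
    (hcell : (i, j) ∈ cellOf (conjP la) (conjP μ)) (hj : j ≤ m) :
    T (i, j) ≤ m + i := by
  obtain ⟨hj1, hμj, hil⟩ := (hla.mem_cellOf_conjP_iff hμ).mp hcell
  have hcol : n ≤ la j := hlam.trans (hla.2.1 j m hj1 hj)
  have hbottom : (la j, j) ∈ cellOf (conjP la) (conjP μ) :=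
    (hla.mem_cellOf_conjP_iff hμ).mpr ⟨hj1, by omega, le_rfl⟩
  have hincr := hssp.apply_add_le_apply_add_row (isPartition_lamPlus hla m) hμ
    (mem_cellOf_conjP_lamPlus hla hμ hcell hj) (k := la j - i)
    (by rw [lamPlus_of_le la hj]; omega)
  rw [Nat.add_sub_cancel' hil] at hincr
  have := hbound _ hbottom
  omega

theorem statement13_general (m n : ℕ) (la μ : ℕ → ℕ)
    (hla : IsPartition la)
    (hμ : IsPartition μ)
    (hlam : n ≤ la m)
    (T : ℕ × ℕ → ℕ)
    (hrange : ∀ p ∈ cellOf (conjP la) (conjP μ), m + 1 ≤ T p ∧ T p ≤ m + n)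
    (hcanon : ∀ p ∈ cellOf (conjP la) (conjP μ), m < p.2 → T p = m + p.1)
    (hssp : IsSSkew (conjP (lamPlus m la)) (conjP μ) T) :
    IsSSkew (conjP la) (conjP μ) T := by
  have hleft : ∀ {i j}, (i, j) ∈ cellOf (conjP la) (conjP μ) → j ≤ m → T (i, j) ≤ m + i :=
    apply_le_add_row_of_col_le hla hμ hlam (fun p hp => (hrange p hp).2) hssp
  have toPlus : ∀ {i j}, (i, j) ∈ cellOf (conjP la) (conjP μ) → j ≤ m →
      (i, j) ∈ cellOf (conjP (lamPlus m la)) (conjP μ) :=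
    mem_cellOf_conjP_lamPlus hla hμ
  refine ⟨fun i j j' h h' hjj' => ?_, fun i i' j h h' hii' => ?_⟩
  · rcases le_or_gt j' m with hj' | hj'
    · exact hssp.1 i j j' (toPlus h (hjj'.trans hj')) (toPlus h' hj') hjj'
    · rw [hcanon _ h' hj']
      rcases le_or_gt j m with hj | hj
      · exact hleft h hj
      · rw [hcanon _ h hj]
  · rcases le_or_gt j m with hj | hj
    · exact hssp.2 i i' j (toPlus h hj) (toPlus h' hj) hii'
    · rw [hcanon _ h hj, hcanon _ h' hj]
      exact Nat.add_lt_add_left hii' m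

/-- if `λ⁺_m ≥ n` and `T⁺` (the restriction of `T` to columns `1,…,m`)
is semistandard, then `T` is semistandard. -/
theorem statement13 (m n : ℕ) (hm : 1 ≤ m) (hn : 1 ≤ n) (la μ ν : ℕ → ℕ)
    (hla : IsPartition la) (hook : la (m + 1) ≤ n)
    (hμ : IsPartition μ) (hμl : ∀ i, μ i ≤ lamPlus m la i)
    (hν : IsPartition ν) (hνω : ∀ i, lamMinus m la i ≤ ν i)
    (hlam : n ≤ la m)
    (T : ℕ × ℕ → ℕ)
    (hrange : ∀ p ∈ cellOf (conjP la) (conjP μ), m + 1 ≤ T p ∧ T p ≤ m + n)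
    (hcanon : ∀ p ∈ cellOf (conjP la) (conjP μ), m < p.2 → T p = m + p.1)
    (hcont : ∀ i, 1 ≤ i → occCount (conjP la) (conjP μ) T (m + i) = ν i)
    (hssp : IsSSkew (conjP (lamPlus m la)) (conjP μ) T) :
    IsSSkew (conjP la) (conjP μ) T :=
  statement13_general m n la μ hla hμ hlam T hrange hcanon hssp
end
end
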